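/- With the setup of a pre-F-frame {g_i} for X_F with respect to Θ_F: if Θ_s = Θ (a fixed BK-space) for all s, then X_F is isomorphic (as a topological vector space) to a closed subspace of the Banach space Θ; in particular X_F is normable. -/

import Mathlib

/-
All the lower frame bounds `A_s ‖f‖_s ≤ ‖T f‖_Θ` of the analysis map `T f = (g_i f)_i` are
measured in the single norm of `Θ`. Hence a sequence whose images converge in `Θ` is Cauchy in
every `‖·‖_s`; by completeness of the `X_s` and compatibility of the norms it converges in `X_F`
to one `f`, and the upper bound `B_0 ‖·‖_0` identifies `T f` as the limit in `Θ`. Chaining the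
bounds gives `‖f‖_s ≤ A_s⁻¹ B_0 ‖f‖_0`.
-/

open Filter Topology

noncomputable section

def IsNormOn {X : Type*} [AddCommGroup X] [Module ℝ X] (S : Set X) (N : X → ℝ) : Prop :=
  (0 : X) ∈ S ∧ (∀ c ∈ S, ∀ d ∈ S, c + d ∈ S) ∧ (∀ (a : ℝ), ∀ c ∈ S, a • c ∈ S) ∧
  (∀ c ∈ S, 0 ≤ N c) ∧ (∀ c ∈ S, N c = 0 → c = 0) ∧
  (∀ c ∈ S, ∀ d ∈ S, N (c + d) ≤ N c + N d) ∧
  (∀ (a : ℝ), ∀ c ∈ S, N (a • c) = |a| * N c)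

def IsBanachOn {X : Type*} [AddCommGroup X] [Module ℝ X] (S : Set X) (N : X → ℝ) : Prop :=
  IsNormOn S N ∧ ∀ u : ℕ → X, (∀ n, u n ∈ S) →
    (∀ ε > 0, ∃ M, ∀ m ≥ M, ∀ n ≥ M, N (u m - u n) < ε) →
    ∃ x ∈ S, Tendsto (fun n => N (u n - x)) atTop (nhds 0)

def IsBKOn (S : Set (ℕ → ℝ)) (N : (ℕ → ℝ) → ℝ) : Prop :=
  IsBanachOn S N ∧ ∀ i, ∃ K : ℝ, ∀ c ∈ S, |c i| ≤ K * N c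

def IsScale {X : Type*} [AddCommGroup X] [Module ℝ X] (S : ℕ → Set X) (N : ℕ → X → ℝ) : Prop :=
  (∀ s, IsBanachOn (S s) (N s)) ∧ (∀ s, S (s+1) ⊆ S s) ∧
  (∀ s, ∀ f ∈ S (s+1), N s f ≤ N (s+1) f) ∧
  (∀ s, ∀ f ∈ S s, ∀ ε > 0, ∃ h ∈ ⋂ t, S t, N s (f - h) < ε)

section PreFFrame

variable {X Y : Type*} [AddCommGroup X] [AddCommGroup Y]

def TendstoInNorm (N : X → ℝ) (u : ℕ → X) (x : X) : Prop :=
  Tendsto (fun n => N (u n - x)) atTop (𝓝 0)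

def CauchySeqInNorm (N : X → ℝ) (u : ℕ → X) : Prop :=
  ∀ ε > 0, ∃ M, ∀ m ≥ M, ∀ n ≥ M, N (u m - u n) < ε

theorem TendstoInNorm.of_le_mul {N : X → ℝ} {N' : Y → ℝ} {u : ℕ → X} {v : ℕ → Y} {x : X} {y : Y}
    {b : ℝ} (hu : TendstoInNorm N u x) (h0 : ∀ n, 0 ≤ N' (v n - y))
    (hle : ∀ n, N' (v n - y) ≤ b * N (u n - x)) : TendstoInNorm N' v y :=
  squeeze_zero h0 hle (by simpa using hu.const_mul b)

theorem CauchySeqInNorm.of_mul_le {N : X → ℝ} {N' : Y → ℝ} {u : ℕ → X} {v : ℕ → Y} {a : ℝ}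
    (hv : CauchySeqInNorm N' v) (ha : 0 < a) (hle : ∀ m n, a * N (u m - u n) ≤ N' (v m - v n)) :
    CauchySeqInNorm N u := by
  intro ε hε
  obtain ⟨M, hM⟩ := hv (a * ε) (by positivity)
  exact ⟨M, fun m hm n hn => lt_of_mul_lt_mul_left ((hle m n).trans_lt (hM m hm n hn)) ha.le⟩

variable [Module ℝ X] [Module ℝ Y]

/-- `T` stands for the analysis operator `f ↦ (g_i f)_i` into `Θ = (S0, N0)`. -/
def IsPreFFrame (S : ℕ → Set X) (N : ℕ → X → ℝ) (S0 : Set Y) (N0 : Y → ℝ) (T : X →ₗ[ℝ] Y)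
    (A B : ℕ → ℝ) : Prop :=
  ∀ f ∈ ⋂ s, S s, T f ∈ S0 ∧ ∀ s, A s * N s f ≤ N0 (T f) ∧ N0 (T f) ≤ B s * N s f

namespace IsNormOn

variable {S : Set X} {N : X → ℝ}

theorem sub_mem (h : IsNormOn S N) {c d : X} (hc : c ∈ S) (hd : d ∈ S) : c - d ∈ S := by
  rw [sub_eq_add_neg, ← neg_one_smul ℝ d]
  exact h.2.1 c hc _ (h.2.2.1 (-1) d hd)

theorem map_zero (h : IsNormOn S N) : N 0 = 0 := by
  simpa using h.2.2.2.2.2.2 0 0 h.1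

theorem nonneg (h : IsNormOn S N) {c : X} (hc : c ∈ S) : 0 ≤ N c :=
  h.2.2.2.1 c hc

theorem eq_zero_of_le_zero (h : IsNormOn S N) {c : X} (hc : c ∈ S) (hle : N c ≤ 0) : c = 0 :=
  h.2.2.2.2.1 c hc (le_antisymm hle (h.nonneg hc))

theorem sub_comm (h : IsNormOn S N) {c d : X} (hc : c ∈ S) (hd : d ∈ S) :
    N (c - d) = N (d - c) := by
  simpa [neg_sub] using h.2.2.2.2.2.2 (-1) (d - c) (h.sub_mem hd hc)

theorem sub_le_sub_add_sub (h : IsNormOn S N) {a b c : X} (ha : a ∈ S) (hb : b ∈ S) (hc : c ∈ S) :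
    N (a - c) ≤ N (a - b) + N (b - c) := by
  simpa using h.2.2.2.2.2.1 (a - b) (h.sub_mem ha hb) (b - c) (h.sub_mem hb hc)

theorem eq_of_tendstoInNorm (h : IsNormOn S N) {u : ℕ → X} {x y : X} (hu : ∀ n, u n ∈ S)
    (hx : x ∈ S) (hy : y ∈ S) (hux : TendstoInNorm N u x) (huy : TendstoInNorm N u y) : x = y := by
  have hbound : ∀ n, N (x - y) ≤ N (u n - x) + N (u n - y) := fun n => by
    rw [h.sub_comm (hu n) hx]
    exact h.sub_le_sub_add_sub hx (hu n) hy
  have hlim : Tendsto (fun n => N (u n - x) + N (u n - y)) atTop (𝓝 0) := by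
    simpa using hux.add huy
  exact sub_eq_zero.mp (h.eq_zero_of_le_zero (h.sub_mem hx hy) (ge_of_tendsto' hlim hbound))

theorem cauchySeqInNorm (h : IsNormOn S N) {u : ℕ → X} {c : X} (hu : ∀ n, u n ∈ S) (hc : c ∈ S)
    (huc : TendstoInNorm N u c) : CauchySeqInNorm N u := by
  intro ε hε
  obtain ⟨M, hM⟩ := eventually_atTop.mp (huc.eventually (gt_mem_nhds (half_pos hε)))
  refine ⟨M, fun m hm n hn => ?_⟩
  calc N (u m - u n) ≤ N (u m - c) + N (c - u n) := h.sub_le_sub_add_sub (hu m) hc (hu n)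
    _ = N (u m - c) + N (u n - c) := by rw [h.sub_comm hc (hu n)]
    _ < ε / 2 + ε / 2 := add_lt_add (hM m hm) (hM n hn)
    _ = ε := add_halves ε

end IsNormOn

namespace IsScale

variable {S : ℕ → Set X} {N : ℕ → X → ℝ}

theorem sub_mem_iInter (hX : IsScale S N) {f h : X} (hf : f ∈ ⋂ s, S s) (hh : h ∈ ⋂ s, S s) :
    f - h ∈ ⋂ s, S s :=
  Set.mem_iInter.mpr fun s =>
    (hX.1 s).1.sub_mem (Set.mem_iInter.mp hf s) (Set.mem_iInter.mp hh s)

/-- Completeness of the Fréchet space `X_F = ⋂ s, S s`. -/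
theorem exists_tendstoInNorm (hX : IsScale S N) {u : ℕ → X} (hu : ∀ n, u n ∈ ⋂ s, S s)
    (hcauchy : ∀ s, CauchySeqInNorm (N s) u) :
    ∃ x ∈ ⋂ s, S s, ∀ s, TendstoInNorm (N s) u x := by
  obtain ⟨hBan, hmono, hNmono, -⟩ := hX
  have hus : ∀ n s, u n ∈ S s := fun n => Set.mem_iInter.mp (hu n)
  choose x hxmem hxlim using fun s => (hBan s).2 u (fun n => hus n s) (hcauchy s)
  -- `‖·‖_s ≤ ‖·‖_{s+1}`, so the limit in `X_{s+1}` is also a limit in `X_s`.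
  have hsucc : ∀ s, x (s + 1) = x s := fun s => by
    have hx' : x (s + 1) ∈ S s := hmono s (hxmem (s + 1))
    refine (hBan s).1.eq_of_tendstoInNorm (fun n => hus n s) hx' (hxmem s) ?_ (hxlim s)
    refine TendstoInNorm.of_le_mul (b := 1) (hxlim (s + 1))
      (fun n => (hBan s).1.nonneg ((hBan s).1.sub_mem (hus n s) hx')) fun n => ?_
    rw [one_mul]
    exact hNmono s _ ((hBan (s + 1)).1.sub_mem (hus n (s + 1)) (hxmem (s + 1)))
  have hconst : ∀ s, x s = x 0 := fun s => by
    induction s with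
    | zero => rfl
    | succ s ih => rw [hsucc s, ih]
  exact ⟨x 0, Set.mem_iInter.mpr fun s => hconst s ▸ hxmem s, fun s => hconst s ▸ hxlim s⟩

end IsScale

namespace IsPreFFrame

variable {S : ℕ → Set X} {N : ℕ → X → ℝ} {S0 : Set Y} {N0 : Y → ℝ} {T : X →ₗ[ℝ] Y} {A B : ℕ → ℝ}

theorem injOn (hX : IsScale S N) (hN0 : IsNormOn S0 N0) (hT : IsPreFFrame S N S0 N0 T A B)
    (hA : 0 < A 0) : Set.InjOn T (⋂ s, S s) := by
  intro f hf h hh hfh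
  have hmem := hX.sub_mem_iInter hf hh
  have hbound : A 0 * N 0 (f - h) ≤ 0 := by
    simpa [map_sub, hfh, hN0.map_zero] using ((hT _ hmem).2 0).1
  exact sub_eq_zero.mp <| (hX.1 0).1.eq_zero_of_le_zero (Set.mem_iInter.mp hmem 0)
    (nonpos_of_mul_nonpos_right hbound hA)

theorem le_inv_mul (hT : IsPreFFrame S N S0 N0 T A B) (hA : ∀ s, 0 < A s) {f : X}
    (hf : f ∈ ⋂ s, S s) (s : ℕ) : N s f ≤ (A s)⁻¹ * N0 (T f) :=
  (le_inv_mul_iff₀ (hA s)).mpr ((hT f hf).2 s).1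

theorem exists_eq_of_approx (hX : IsScale S N) (hN0 : IsNormOn S0 N0)
    (hT : IsPreFFrame S N S0 N0 T A B) (hA : ∀ s, 0 < A s) {c : Y} (hc : c ∈ S0)
    (happrox : ∀ ε > 0, ∃ f ∈ ⋂ s, S s, N0 (T f - c) < ε) : ∃ f ∈ ⋂ s, S s, T f = c := by
  choose f hf hfc using fun n : ℕ => happrox (1 / (n + 1)) (by positivity)
  have hTf : TendstoInNorm N0 (fun n => T (f n)) c :=
    squeeze_zero (fun n => hN0.nonneg (hN0.sub_mem (hT _ (hf n)).1 hc))
      (fun n => (hfc n).le) tendsto_one_div_add_atTop_nhds_zero_nat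
  have hcauchy : ∀ s, CauchySeqInNorm (N s) f := fun s =>
    (hN0.cauchySeqInNorm (fun n => (hT _ (hf n)).1) hc hTf).of_mul_le (hA s) fun m n => by
      simpa [map_sub] using ((hT _ (hX.sub_mem_iInter (hf m) (hf n))).2 s).1
  obtain ⟨x, hx, hfx⟩ := hX.exists_tendstoInNorm hf hcauchy
  have hTx : TendstoInNorm N0 (fun n => T (f n)) (T x) := by
    refine (hfx 0).of_le_mul (b := B 0) (fun n => ?_) fun n => ?_
    · exact hN0.nonneg (hN0.sub_mem (hT _ (hf n)).1 (hT x hx).1)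
    · simpa [map_sub] using ((hT _ (hX.sub_mem_iInter (hf n) hx)).2 0).2
  exact ⟨x, hx, hN0.eq_of_tendstoInNorm (fun n => (hT _ (hf n)).1) (hT x hx).1 hc hTx hTf⟩

end IsPreFFrame

end PreFFrame

/-- if `(g i)` is a pre-F-frame for `X_F = ⋂ X_s` with respect to a fixed
Banach BK-space `Θ = (S₀, N₀)` (i.e. `Θ_s = Θ` for all `s`), then the analysis map is a
topological isomorphism of `X_F` onto a closed subspace of `Θ`; in particular all the
norms of `X_F` are dominated by `N 0`, so `X_F` is normable. -/
theorem preFframe_constant_theta_normable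
    {X : Type*} [AddCommGroup X] [Module ℝ X]
    (S : ℕ → Set X) (N : ℕ → X → ℝ) (hX : IsScale S N)
    (S0 : Set (ℕ → ℝ)) (N0 : (ℕ → ℝ) → ℝ) (hBK : IsBKOn S0 N0)
    (g : ℕ → X →ₗ[ℝ] ℝ) (A B : ℕ → ℝ)
    (hA : ∀ s, 0 < A s) (hAB : ∀ s, A s ≤ B s)
    (hframe : ∀ f ∈ ⋂ s, S s, (fun i => g i f) ∈ S0 ∧
      ∀ s, A s * N s f ≤ N0 (fun i => g i f) ∧ N0 (fun i => g i f) ≤ B s * N s f) :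
    (∀ f ∈ ⋂ s, S s, ∀ h ∈ ⋂ s, S s, (fun i => g i f) = (fun i => g i h) → f = h) ∧
    (∀ c ∈ S0, (∀ ε > 0, ∃ f ∈ ⋂ s, S s, N0 ((fun i => g i f) - c) < ε) →
      ∃ f ∈ ⋂ s, S s, (fun i => g i f) = c) ∧
    (∀ s, ∃ C > 0, ∀ f ∈ ⋂ t, S t, N s f ≤ C * N0 (fun i => g i f)) ∧
    (∃ C > 0, ∀ f ∈ ⋂ t, S t, N0 (fun i => g i f) ≤ C * N 0 f) ∧
    (∀ s, ∃ C > 0, ∀ f ∈ ⋂ t, S t, N s f ≤ C * N 0 f) := by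
  have hT : IsPreFFrame S N S0 N0 (LinearMap.pi g) A B := hframe
  have hN0 : IsNormOn S0 N0 := hBK.1.1
  have hB0 : 0 < B 0 := (hA 0).trans_le (hAB 0)
  refine ⟨hT.injOn hX hN0 (hA 0), fun c hc => hT.exists_eq_of_approx hX hN0 hA hc,
    fun s => ⟨(A s)⁻¹, inv_pos.mpr (hA s), fun f hf => hT.le_inv_mul hA hf s⟩,
    ⟨B 0, hB0, fun f hf => ((hT f hf).2 0).2⟩,
    fun s => ⟨(A s)⁻¹ * B 0, mul_pos (inv_pos.mpr (hA s)) hB0, fun f hf => ?_⟩⟩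
  calc N s f ≤ (A s)⁻¹ * N0 (LinearMap.pi g f) := hT.le_inv_mul hA hf s
    _ ≤ (A s)⁻¹ * (B 0 * N 0 f) :=
      mul_le_mul_of_nonneg_left ((hT f hf).2 0).2 (inv_nonneg.mpr (hA s).le)
    _ = (A s)⁻¹ * B 0 * N 0 f := (mul_assoc _ _ _).symm
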